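/- Let n ≥ 1 and q ≥ 2 be integers. Let B_0, …, B_n be nonnegative reals with B_0 = 1; set |C| := Σ_{j=0}^{n} B_j, define B_i^⊥ := (1/|C|) Σ_{j=0}^{n} B_j K_i(q;j) for 0 ≤ i ≤ n, and set |C^⊥| := Σ_{i=0}^{n} B_i^⊥. Assume B_i^⊥ ≥ B_i for all 1 ≤ i ≤ n. Let h : {0,…,n} → ℝ be any function and let Z(x) = Σ_{i=0}^{n} z_i K_i(q;x) be a polynomial with real coefficients z_i in the Krawtchouk basis such that for all 1 ≤ i ≤ n: (i) Z(i) ≤ h(i) and (ii) z_i·|C^⊥| − Z(i) ≥ 0. Then Σ_{i=0}^{n} (B_i^⊥ − B_i)·h(i) ≥ z_0·|C^⊥| − Z(0). -/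

import Mathlib

/-- The `q`-ary Krawtchouk polynomial `K_t(q;x)` (with parameter `n`), evaluated at a
natural number `x`. -/
def kraw (n q t x : ℕ) : ℤ :=
  ∑ l ∈ Finset.range (t + 1),
    (-1 : ℤ) ^ l * (x.choose l) * ((n - x).choose (t - l)) * ((q : ℤ) - 1) ^ (t - l)

open Polynomial Finset

lemma coeff_pow_linear (a : ℤ) (m u : ℕ) :
    ((C a * X + 1 : ℤ[X]) ^ m).coeff u = (m.choose u : ℤ) * a ^ u := by
  rw [add_pow]
  rw [finset_sum_coeff]
  have : ∀ k ∈ range (m+1),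
      ((C a * X) ^ k * 1 ^ (m - k) * (m.choose k : ℤ[X])).coeff u
      = if k = u then (m.choose k : ℤ) * a ^ k else 0 := by
    intro k hk
    rw [one_pow, mul_one, mul_pow, ← C_pow, ← C_eq_natCast, mul_right_comm, ← C_mul, C_mul_X_pow_eq_monomial,
      coeff_monomial]
    simp [eq_comm, mul_comm]
  rw [Finset.sum_congr rfl this, Finset.sum_ite_eq' (range (m+1)) u]
  by_cases hu : u ∈ range (m+1)
  · simp [hu]
  · simp only [hu, if_false]
    rw [Nat.choose_eq_zero_of_lt (by simpa using Nat.lt_of_succ_le (not_lt.mp (by simpa [Nat.lt_succ_iff] using hu)))]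
    · simp

lemma coeff_eq_kraw (n q t s : ℕ) :
    (((C ((q:ℤ)-1) * X + 1) ^ (n - t) * (C (-1:ℤ) * X + 1) ^ t).coeff s) = kraw n q s t := by
  rw [coeff_mul, Finset.Nat.sum_antidiagonal_eq_sum_range_succ_mk]
  rw [kraw, ← Finset.sum_range_reflect]
  refine Finset.sum_congr rfl ?_
  intro k hk
  rw [Finset.mem_range, Nat.lt_succ_iff] at hk
  simp only [Nat.succ_sub_one]
  rw [coeff_pow_linear, coeff_pow_linear, Nat.sub_sub_self hk]
  ring

lemma key_poly (n q j : ℕ) (hj : j ≤ n) :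
    ∑ t ∈ range (n+1),
      C (kraw n q t j) * ((C ((q:ℤ)-1) * X + 1) ^ (n - t) * (C (-1:ℤ) * X + 1) ^ t)
      = C ((q:ℤ)^n) * X ^ j := by
  set a : ℤ := (q:ℤ) - 1 with ha
  set A : ℤ[X] := C a * X + 1 with hA
  set Bp : ℤ[X] := C (-1:ℤ) * X + 1 with hBp
  set g : ℕ × ℕ → ℤ[X] := fun p =>
    C ((-1)^p.1 * (j.choose p.1 : ℤ) * (((n-j).choose p.2 : ℤ) * a^p.2)) *
      (A ^ (n - (p.1+p.2)) * Bp ^ (p.1+p.2)) with hg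
  have step1 : ∀ t ∈ range (n+1),
      C (kraw n q t j) * (A ^ (n-t) * Bp ^ t) = ∑ p ∈ Finset.HasAntidiagonal.antidiagonal t, g p := by
    intro t ht
    rw [Finset.Nat.sum_antidiagonal_eq_sum_range_succ_mk]
    rw [kraw, map_sum, Finset.sum_mul]
    refine Finset.sum_congr rfl ?_
    intro l hl
    rw [Finset.mem_range, Nat.lt_succ_iff] at hl
    simp only [hg]
    rw [Nat.add_sub_cancel' hl]
    rw [ha]
    ring_nf
  rw [Finset.sum_congr rfl step1]
  have hmaps : ∀ p ∈ (range (j+1)) ×ˢ (range (n-j+1)), p.1 + p.2 ∈ range (n+1) := by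
    intro p hp
    rw [Finset.mem_product, Finset.mem_range, Finset.mem_range] at hp
    rw [Finset.mem_range]
    omega
  have step2 : ∑ t ∈ range (n+1), ∑ p ∈ Finset.HasAntidiagonal.antidiagonal t, g p
      = ∑ p ∈ (range (j+1)) ×ˢ (range (n-j+1)), g p := by
    rw [← Finset.sum_fiberwise_of_maps_to hmaps g]
    refine Finset.sum_congr rfl ?_
    intro t ht
    refine (Finset.sum_subset ?_ ?_).symm
    · intro p hp
      rw [Finset.mem_filter] at hp
      rw [Finset.HasAntidiagonal.mem_antidiagonal]
      exact hp.2
    · intro p hp hp2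
      rw [Finset.HasAntidiagonal.mem_antidiagonal] at hp
      have : p.1 > j ∨ p.2 > n - j := by
        by_contra hcon
        push_neg at hcon
        exact hp2 (Finset.mem_filter.mpr ⟨Finset.mem_product.mpr
          ⟨Finset.mem_range.mpr (by omega), Finset.mem_range.mpr (by omega)⟩, hp⟩)
      rcases this with h1 | h1
      · simp [hg, Nat.choose_eq_zero_of_lt h1]
      · simp [hg, Nat.choose_eq_zero_of_lt h1]
  rw [step2, Finset.sum_product]
  have step3 : ∀ l ∈ range (j+1), ∀ m ∈ range (n-j+1),
      g (l, m) = (C ((-1)^l * (j.choose l : ℤ)) * (A ^ (j - l) * Bp ^ l)) *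
        (C (((n-j).choose m : ℤ) * a^m) * (A ^ (n - j - m) * Bp ^ m)) := by
    intro l hl m hm
    rw [Finset.mem_range, Nat.lt_succ_iff] at hl hm
    have he : n - (l + m) = (j - l) + (n - j - m) := by omega
    simp only [hg, he, pow_add, map_mul]
    ring
  calc ∑ l ∈ range (j+1), ∑ m ∈ range (n-j+1), g (l, m)
      = ∑ l ∈ range (j+1), ∑ m ∈ range (n-j+1),
          (C ((-1)^l * (j.choose l : ℤ)) * (A ^ (j - l) * Bp ^ l)) *
          (C (((n-j).choose m : ℤ) * a^m) * (A ^ (n - j - m) * Bp ^ m)) := by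
        refine Finset.sum_congr rfl fun l hl => Finset.sum_congr rfl fun m hm => step3 l hl m hm
    _ = (∑ l ∈ range (j+1), C ((-1)^l * (j.choose l : ℤ)) * (A ^ (j - l) * Bp ^ l)) *
        (∑ m ∈ range (n-j+1), C (((n-j).choose m : ℤ) * a^m) * (A ^ (n - j - m) * Bp ^ m)) := by
        rw [Finset.sum_mul_sum]
    _ = C ((q:ℤ)^n) * X ^ j := by
        have hS1 : ∑ l ∈ range (j+1), C ((-1)^l * (j.choose l : ℤ)) * (A ^ (j - l) * Bp ^ l)
            = C ((q:ℤ)^j) * X ^ j := by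
          have h1 : C (-1:ℤ) * Bp + A = C (q:ℤ) * X := by
            rw [hA, hBp, ha]
            simp only [map_sub, map_neg, map_one, C_1]
            ring
          have h2 : ∑ l ∈ range (j+1), C ((-1)^l * (j.choose l : ℤ)) * (A ^ (j - l) * Bp ^ l)
              = ∑ l ∈ range (j+1), (C (-1:ℤ) * Bp) ^ l * A ^ (j - l) * (j.choose l : ℤ[X]) := by
            refine Finset.sum_congr rfl fun l hl => ?_
            simp only [map_mul, map_pow, map_neg, map_one, C_eq_natCast, mul_pow]
            ring
          rw [h2, ← add_pow, h1, mul_pow, C_pow]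
        have hS2 : ∑ m ∈ range (n-j+1), C (((n-j).choose m : ℤ) * a^m) * (A ^ (n - j - m) * Bp ^ m)
            = C ((q:ℤ)^(n-j)) := by
          have h1 : C a * Bp + A = C (q:ℤ) := by
            rw [hA, hBp, ha]
            simp only [map_sub, map_neg, map_one, C_1]
            ring
          have h2 : ∑ m ∈ range (n-j+1), C (((n-j).choose m : ℤ) * a^m) * (A ^ (n - j - m) * Bp ^ m)
              = ∑ m ∈ range (n-j+1), (C a * Bp) ^ m * A ^ (n - j - m) * ((n-j).choose m : ℤ[X]) := by
            refine Finset.sum_congr rfl fun m hm => ?_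
            simp only [map_mul, map_pow, C_eq_natCast, mul_pow]
            ring
          rw [h2, ← add_pow, h1, C_pow]
        rw [hS1, hS2, mul_right_comm, ← C_mul, ← pow_add, Nat.add_sub_cancel' hj]

lemma kraw_orth (n q s j : ℕ) (hj : j ≤ n) :
    ∑ t ∈ range (n+1), kraw n q s t * kraw n q t j
      = if s = j then (q:ℤ)^n else 0 := by
  have h := congrArg (fun p : ℤ[X] => p.coeff s) (key_poly n q j hj)
  simp only [finset_sum_coeff, coeff_C_mul, coeff_X_pow] at h
  calc ∑ t ∈ range (n+1), kraw n q s t * kraw n q t j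
      = ∑ t ∈ range (n+1), kraw n q t j *
          (((C ((q:ℤ)-1) * X + 1) ^ (n - t) * (C (-1:ℤ) * X + 1) ^ t).coeff s) := by
        refine Finset.sum_congr rfl fun t ht => ?_
        rw [coeff_eq_kraw, mul_comm]
    _ = (q:ℤ)^n * (if s = j then 1 else 0) := h
    _ = if s = j then (q:ℤ)^n else 0 := by split <;> simp

lemma kraw_zero (n q x : ℕ) : kraw n q 0 x = 1 := by
  simp [kraw]

lemma kraw_sum (n q j : ℕ) (hj : j ≤ n) :
    ∑ t ∈ range (n+1), kraw n q t j = if 0 = j then (q:ℤ)^n else 0 := by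
  have := kraw_orth n q 0 j hj
  simpa [kraw_zero] using this

/-- Theorem 10 (key polynomial bound): if `Z(i) ≤ h(i)` and `z_i |C^⊥| - Z(i) ≥ 0`
for `1 ≤ i ≤ n`, then `∑_i (B_i^⊥ - B_i) h(i) ≥ z_0 |C^⊥| - Z(0)`. -/
theorem key_polynomial_bound (n q : ℕ) (hn : 1 ≤ n) (hq : 2 ≤ q)
    (B : ℕ → ℝ) (hBnn : ∀ i, i ≤ n → 0 ≤ B i) (hB0 : B 0 = 1)
    (Ccard : ℝ) (hCcard : Ccard = ∑ j ∈ Finset.range (n + 1), B j)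
    (Bperp : ℕ → ℝ)
    (hBperp : ∀ i, i ≤ n →
      Bperp i = (1 / Ccard) * ∑ j ∈ Finset.range (n + 1), B j * (kraw n q i j : ℝ))
    (Cperpcard : ℝ) (hCperpcard : Cperpcard = ∑ i ∈ Finset.range (n + 1), Bperp i)
    (hdom : ∀ i, 1 ≤ i → i ≤ n → B i ≤ Bperp i)
    (h : ℕ → ℝ) (z : ℕ → ℝ) (Z : ℕ → ℝ)
    (hZ : ∀ x, x ≤ n → Z x = ∑ i ∈ Finset.range (n + 1), z i * (kraw n q i x : ℝ))
    (hi : ∀ i, 1 ≤ i → i ≤ n → Z i ≤ h i)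
    (hii : ∀ i, 1 ≤ i → i ≤ n → 0 ≤ z i * Cperpcard - Z i) :
    ∑ i ∈ Finset.range (n + 1), (Bperp i - B i) * h i ≥ z 0 * Cperpcard - Z 0 := by
  have h0mem : (0 : ℕ) ∈ Finset.range (n + 1) := Finset.mem_range.mpr (Nat.succ_pos n)
  have hCpos : 0 < Ccard := by
    rw [hCcard]
    calc (0:ℝ) < 1 := one_pos
      _ = B 0 := hB0.symm
      _ ≤ ∑ j ∈ range (n+1), B j :=
        Finset.single_le_sum (fun j hj => hBnn j (Nat.lt_succ_iff.mp (Finset.mem_range.mp hj))) h0mem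
  have hKR : ∀ s ≤ n, ∀ j ≤ n,
      ∑ t ∈ range (n+1), (kraw n q s t : ℝ) * (kraw n q t j : ℝ)
        = if s = j then (q:ℝ)^n else 0 := by
    intro s hs j hj
    have := kraw_orth n q s j hj
    have h2 := congrArg (fun x : ℤ => (x : ℝ)) this
    push_cast at h2
    simpa using h2
  have transform : ∀ s, s ≤ n →
      ∑ t ∈ range (n+1), Bperp t * (kraw n q s t : ℝ) = ((q:ℝ)^n / Ccard) * B s := by
    intro s hs
    calc ∑ t ∈ range (n+1), Bperp t * (kraw n q s t : ℝ)
        = ∑ t ∈ range (n+1), ∑ j ∈ range (n+1),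
            (1 / Ccard) * (B j * ((kraw n q t j : ℝ) * (kraw n q s t : ℝ))) := by
          refine Finset.sum_congr rfl fun t ht => ?_
          rw [hBperp t (Nat.lt_succ_iff.mp (Finset.mem_range.mp ht)), Finset.mul_sum,
            Finset.sum_mul]
          refine Finset.sum_congr rfl fun j hj => ?_
          ring
      _ = ∑ j ∈ range (n+1),
            (1 / Ccard) * (B j * ∑ t ∈ range (n+1), (kraw n q s t : ℝ) * (kraw n q t j : ℝ)) := by
          rw [Finset.sum_comm]
          refine Finset.sum_congr rfl fun j hj => ?_
          rw [Finset.mul_sum, Finset.mul_sum]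
          refine Finset.sum_congr rfl fun t ht => ?_
          ring
      _ = ∑ j ∈ range (n+1), (1 / Ccard) * (B j * (if s = j then (q:ℝ)^n else 0)) := by
          refine Finset.sum_congr rfl fun j hj => ?_
          rw [hKR s hs j (Nat.lt_succ_iff.mp (Finset.mem_range.mp hj))]
      _ = ((q:ℝ)^n / Ccard) * B s := by
          rw [Finset.sum_eq_single s]
          · simp; ring
          · intro j hj hne
            simp [Ne.symm hne]
          · intro hs'
            exact absurd (Finset.mem_range.mpr (Nat.lt_succ_of_le hs)) hs'
  have hCperp : Cperpcard = (q:ℝ)^n / Ccard := by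
    rw [hCperpcard]
    have : ∀ t ∈ range (n+1), Bperp t = Bperp t * (kraw n q 0 t : ℝ) := by
      intro t ht
      rw [kraw_zero]
      simp
    rw [Finset.sum_congr rfl this, transform 0 (Nat.zero_le n), hB0, mul_one]
  have transform' : ∀ s, s ≤ n →
      ∑ t ∈ range (n+1), Bperp t * (kraw n q s t : ℝ) = Cperpcard * B s := by
    intro s hs
    rw [transform s hs, hCperp]
  have hBperp0 : Bperp 0 = 1 := by
    rw [hBperp 0 (Nat.zero_le n)]
    have : ∀ j ∈ range (n+1), B j * (kraw n q 0 j : ℝ) = B j := by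
      intro j hj
      rw [kraw_zero]
      simp
    rw [Finset.sum_congr rfl this, ← hCcard]
    field_simp
  have step1 : ∑ i ∈ range (n+1), (Bperp i - B i) * Z i
      ≤ ∑ i ∈ range (n+1), (Bperp i - B i) * h i := by
    refine Finset.sum_le_sum fun i hmem => ?_
    rcases Nat.eq_zero_or_pos i with rfl | hipos
    · rw [hBperp0, hB0]
      simp
    · have hile : i ≤ n := Nat.lt_succ_iff.mp (Finset.mem_range.mp hmem)
      exact mul_le_mul_of_nonneg_left (hi i hipos hile)
        (sub_nonneg.mpr (hdom i hipos hile))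
  have step2 : ∑ i ∈ range (n+1), (Bperp i - B i) * Z i
      = ∑ i ∈ range (n+1), B i * (z i * Cperpcard - Z i) := by
    have hBpZ : ∑ i ∈ range (n+1), Bperp i * Z i
        = ∑ i ∈ range (n+1), z i * Cperpcard * B i := by
      calc ∑ i ∈ range (n+1), Bperp i * Z i
          = ∑ i ∈ range (n+1), ∑ t ∈ range (n+1),
              z t * (Bperp i * (kraw n q t i : ℝ)) := by
            refine Finset.sum_congr rfl fun i hmem => ?_
            rw [hZ i (Nat.lt_succ_iff.mp (Finset.mem_range.mp hmem)), Finset.mul_sum]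
            refine Finset.sum_congr rfl fun t ht => ?_
            ring
        _ = ∑ t ∈ range (n+1), z t * ∑ i ∈ range (n+1), Bperp i * (kraw n q t i : ℝ) := by
            rw [Finset.sum_comm]
            refine Finset.sum_congr rfl fun t ht => ?_
            rw [Finset.mul_sum]
        _ = ∑ t ∈ range (n+1), z t * Cperpcard * B t := by
            refine Finset.sum_congr rfl fun t ht => ?_
            rw [transform' t (Nat.lt_succ_iff.mp (Finset.mem_range.mp ht))]
            ring
    calc ∑ i ∈ range (n+1), (Bperp i - B i) * Z i
        = ∑ i ∈ range (n+1), Bperp i * Z i - ∑ i ∈ range (n+1), B i * Z i := by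
          rw [← Finset.sum_sub_distrib]
          refine Finset.sum_congr rfl fun i _ => ?_
          ring
      _ = ∑ i ∈ range (n+1), z i * Cperpcard * B i - ∑ i ∈ range (n+1), B i * Z i := by
          rw [hBpZ]
      _ = ∑ i ∈ range (n+1), B i * (z i * Cperpcard - Z i) := by
          rw [← Finset.sum_sub_distrib]
          refine Finset.sum_congr rfl fun i _ => ?_
          ring
  have step3 : z 0 * Cperpcard - Z 0 ≤ ∑ i ∈ range (n+1), B i * (z i * Cperpcard - Z i) := by
    rw [← Finset.add_sum_erase _ _ h0mem, hB0, one_mul]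
    have : 0 ≤ ∑ i ∈ (range (n+1)).erase 0, B i * (z i * Cperpcard - Z i) := by
      refine Finset.sum_nonneg fun i hmem => ?_
      have h1 : i ≠ 0 := (Finset.mem_erase.mp hmem).1
      have h2 : i ≤ n := Nat.lt_succ_iff.mp (Finset.mem_range.mp (Finset.mem_erase.mp hmem).2)
      exact mul_nonneg (hBnn i h2) (hii i (Nat.one_le_iff_ne_zero.mpr h1) h2)
    linarith
  calc z 0 * Cperpcard - Z 0
      ≤ ∑ i ∈ range (n+1), B i * (z i * Cperpcard - Z i) := step3
    _ = ∑ i ∈ range (n+1), (Bperp i - B i) * Z i := step2.symm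
    _ ≤ ∑ i ∈ range (n+1), (Bperp i - B i) * h i := step1
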